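/- arXiv:1808.04970 — 2 statements merged into one kernel-verified Lean document; each statement's English description precedes it below -/
import Mathlib

section
/- Fix ρ with 0 ≤ ρ < 1 and reals σ_ỹ², σ_ν1², σ_ζ1², σ_ζ2² with σ_ỹ² > 0. Define Σ_BB = σ_ỹ² + σ_ν1², Σ_BD = [σ_ỹ², σ_ỹ² + σ_ν1²], and Σ_DD = [[σ_ỹ² + σ_ζ1², σ_ỹ²],[σ_ỹ², σ_ỹ² + σ_ν1² + σ_ζ2²]] (all variances nonnegative, with the additional restriction σ_ν2² = 0). Suppose two parameter vectors θ₀ = (ρ, σ_ỹ,0², σ_ν1,0², σ_ζ1,0², σ_ζ2,0²) and θ₁ = (ρ, σ_ỹ,1², σ_ν1,1², σ_ζ1,1², σ_ζ2,1²) yield, for some reals p₀, p₁, the same quantities p·(1−ρ²) − Σ_BB, p·ρ·Cᵀ + Σ_BD, and p·C·Cᵀ + Σ_DD, where C = (ρ, ρ)ᵀ. Then p₁ = p₀ and θ₁ = θ₀. -/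
/-- Identification with the restriction `σ_ν2² = 0`: if two parameter vectors
(sharing `ρ` with `0 ≤ ρ < 1`) yield, for some `p₀, p₁`, the same moment quantities
`p(1-ρ²) - Σ_BB`, `pρCᵀ + Σ_BD` and `pCCᵀ + Σ_DD` (with `C = (ρ,ρ)ᵀ`,
`Σ_BB = σ_ỹ² + σ_ν1²`, `Σ_BD = [σ_ỹ², σ_ỹ² + σ_ν1²]`,
`Σ_DD = [[σ_ỹ²+σ_ζ1², σ_ỹ²],[σ_ỹ², σ_ỹ²+σ_ν1²+σ_ζ2²]]`), then the parameters coincide. -/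
theorem identification_sigma_nu2_zero (ρ : ℝ) (hρ0 : 0 ≤ ρ) (hρ1 : ρ < 1)
    (σy0 σν10 σζ10 σζ20 σy1 σν11 σζ11 σζ21 p0 p1 : ℝ)
    (hσy0 : 0 < σy0) (hσy1 : 0 < σy1)
    (hσν10 : 0 ≤ σν10) (hσν11 : 0 ≤ σν11)
    (hσζ10 : 0 ≤ σζ10) (hσζ11 : 0 ≤ σζ11)
    (hσζ20 : 0 ≤ σζ20) (hσζ21 : 0 ≤ σζ21)
    -- p(1-ρ²) - Σ_BB agree
    (hBB : p1 * (1 - ρ ^ 2) - (σy1 + σν11) = p0 * (1 - ρ ^ 2) - (σy0 + σν10))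
    -- pρCᵀ + Σ_BD agree (componentwise)
    (hBD1 : p1 * ρ ^ 2 + σy1 = p0 * ρ ^ 2 + σy0)
    (hBD2 : p1 * ρ ^ 2 + (σy1 + σν11) = p0 * ρ ^ 2 + (σy0 + σν10))
    -- pCCᵀ + Σ_DD agree (componentwise)
    (hDD11 : p1 * ρ ^ 2 + (σy1 + σζ11) = p0 * ρ ^ 2 + (σy0 + σζ10))
    (hDD12 : p1 * ρ ^ 2 + σy1 = p0 * ρ ^ 2 + σy0)
    (hDD22 : p1 * ρ ^ 2 + (σy1 + σν11 + σζ21) = p0 * ρ ^ 2 + (σy0 + σν10 + σζ20)) :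
    p1 = p0 ∧ σy1 = σy0 ∧ σν11 = σν10 ∧ σζ11 = σζ10 ∧ σζ21 = σζ20 := by
  have hp : p1 = p0 := by nlinarith [hBB, hBD2]
  subst hp
  have hy : σy1 = σy0 := by linarith
  refine ⟨rfl, hy, by linarith, by linarith, by linarith⟩
end

section
/- In the setting of the two-vintage identification proof without the restriction σ_ν2² = 0: if θ₀ and θ₁ generate the same Kalman-filter moment equations with p₁ = p₀ + δ, then necessarily σ_ỹ,1² = σ_ỹ,0² − δρ², σ_ν1,1² = σ_ν1,0², σ_ν2,1² = σ_ν2,0² + δ, σ_ζ1,1² = σ_ζ1,0², σ_ζ2,1² = σ_ζ2,0²; and if additionally σ_ν2,1² = σ_ν2,0² = 0 is imposed, then δ = 0 and θ₁ = θ₀. -/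
/-- Identification without the restriction `σ_ν2² = 0`: if `θ₀` and `θ₁` generate the
same moment equations with `p₁ = p₀ + δ`, then the parameters are related by
`σ_ỹ,1² = σ_ỹ,0² - δρ²`, `σ_ν1,1² = σ_ν1,0²`, `σ_ν2,1² = σ_ν2,0² + δ`,
`σ_ζ1,1² = σ_ζ1,0²`, `σ_ζ2,1² = σ_ζ2,0²`; and if additionally
`σ_ν2,1² = σ_ν2,0² = 0`, then `δ = 0` and `θ₁ = θ₀`. -/
theorem identification_general (ρ : ℝ) (hρ0 : 0 ≤ ρ) (hρ1 : ρ < 1)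
    (σy0 σν10 σν20 σζ10 σζ20 σy1 σν11 σν21 σζ11 σζ21 p0 p1 δ : ℝ)
    (hδ : p1 = p0 + δ)
    -- p(1-ρ²) - Σ_BB agree, with Σ_BB = σ_ỹ² + σ_ν1² + σ_ν2²
    (hBB : p1 * (1 - ρ ^ 2) - (σy1 + σν11 + σν21) =
           p0 * (1 - ρ ^ 2) - (σy0 + σν10 + σν20))
    -- pρCᵀ + Σ_BD agree (componentwise)
    (hBD1 : p1 * ρ ^ 2 + σy1 = p0 * ρ ^ 2 + σy0)
    (hBD2 : p1 * ρ ^ 2 + (σy1 + σν11) = p0 * ρ ^ 2 + (σy0 + σν10))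
    -- pCCᵀ + Σ_DD agree (componentwise)
    (hDD11 : p1 * ρ ^ 2 + (σy1 + σζ11) = p0 * ρ ^ 2 + (σy0 + σζ10))
    (hDD12 : p1 * ρ ^ 2 + σy1 = p0 * ρ ^ 2 + σy0)
    (hDD22 : p1 * ρ ^ 2 + (σy1 + σν11 + σζ21) = p0 * ρ ^ 2 + (σy0 + σν10 + σζ20)) :
    (σy1 = σy0 - δ * ρ ^ 2 ∧ σν11 = σν10 ∧ σν21 = σν20 + δ ∧
     σζ11 = σζ10 ∧ σζ21 = σζ20) ∧
    (σν21 = 0 → σν20 = 0 →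
      δ = 0 ∧ p1 = p0 ∧ σy1 = σy0 ∧ σν11 = σν10 ∧ σν21 = σν20 ∧
      σζ11 = σζ10 ∧ σζ21 = σζ20) := by
  subst hδ
  have h1 : σy1 = σy0 - δ * ρ ^ 2 := by linarith
  have h2 : σν11 = σν10 := by linarith
  have h3 : σν21 = σν20 + δ := by nlinarith [hBB]
  have h4 : σζ11 = σζ10 := by linarith
  have h5 : σζ21 = σζ20 := by linarith
  refine ⟨⟨h1, h2, h3, h4, h5⟩, fun ha hb => ?_⟩
  have hd : δ = 0 := by linarith
  subst hd
  simp_all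
end
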